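/- Let β > 0 and D ≥ 2/β, and let (z_i, v_i)_{i∈I}, (x_k, δ_k)_{k∈K} be interpolation data in E, with n_i = v_i/‖v_i‖ and s_k = max(0, δ_k − 1/β). The data is interpolated by some nonempty closed convex β-smooth set C with diam(C) ≤ D if and only if there exist w_k ∈ E (k ∈ K) such that for all i, j ∈ I and k, l ∈ K: ⟪n_i, z_j − (1/β)n_j − z_i + (1/β)n_i⟫ ≤ 0; ⟪n_i, w_k + s_k·n_i − z_i + (1/β)n_i⟫ ≤ 0; ‖x_k − w_k‖ ≤ 1/β − δ_k + s_k; ‖z_i − (1/β)n_i − (z_j − (1/β)n_j)‖ ≤ D − 2/β; ‖z_i − (1/β)n_i − w_k‖ ≤ D − 2/β − s_k; and ‖w_k − w_l‖ ≤ D − 2/β − s_k − s_l. -/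

import Mathlib

/-!
Write `r = 1/β`, `cᵢ = zᵢ - r nᵢ` and `sₖ = max 0 (δₖ - r)`. If `C` interpolates the data, the
rolling ball `closedBall cᵢ r` lies in `C`, and so does a ball `closedBall wₖ (sₖ + r)` with
`‖xₖ - wₖ‖ ≤ r - δₖ + sₖ`: for `δₖ ≥ r` take `wₖ = xₖ`, otherwise roll the ball at a boundary
point of `C` nearest to `xₖ`. The half-space conditions say that `nᵢ` supports all these balls,
and the distance conditions are the diameter bound between any two of them. Conversely, if `K` is
the closed convex hull of the points `cᵢ` and the balls `closedBall wₖ sₖ`, then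
`K + closedBall 0 r` is `β`-smooth (every boundary point is touched by a translate of
`closedBall 0 r` inside it), has `nᵢ` as normal at `zᵢ = cᵢ + r nᵢ`, and has diameter at most
`diam K + 2r ≤ D`.
-/

open Metric Set
open scoped RealInnerProductSpace Pointwise

noncomputable section

variable {F : Type*} [NormedAddCommGroup F] [InnerProductSpace ℝ F]

/-- The normal cone of a set `C` at a point `z`. -/
def normalCone (C : Set F) (z : F) : Set F :=
  {v | ∀ x ∈ C, ⟪v, x - z⟫ ≤ 0}

/-- A set `C` is `β`-smooth if at every boundary point `z`, every unit normal vector `n`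
gives a closed ball of radius `1/β` centered at `z - (1/β) n` contained in `C`. -/
def IsSmoothSet (β : ℝ) (C : Set F) : Prop :=
  ∀ z ∈ frontier C, ∀ n ∈ normalCone C z, ‖n‖ = 1 →
    closedBall (z - (1 / β) • n) (1 / β) ⊆ C

/-- A set `C` is `α`-strongly convex if at every boundary point `z`, every unit normal
vector `n` gives a closed ball of radius `1/α` centered at `z - (1/α) n` containing `C`. -/
def IsStronglyConvexSet (α : ℝ) (C : Set F) : Prop :=
  ∀ z ∈ frontier C, ∀ n ∈ normalCone C z, ‖n‖ = 1 →
    C ⊆ closedBall (z - (1 / α) • n) (1 / α)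

/-- `diam C ≤ D`, expressed pointwise. -/
def DiamLE (C : Set F) (D : ℝ) : Prop :=
  ∀ x ∈ C, ∀ y ∈ C, ‖x - y‖ ≤ D

/-- The `δ`-interior of a set: points whose closed `δ`-ball lies inside the set. -/
def deltaInterior (δ : ℝ) (C : Set F) : Set F :=
  {x | closedBall x δ ⊆ C}

/-- The set `C` interpolates the data: `z i ∈ C` with normal vector `v i`, and
`x k` lies in the `δ k`-interior of `C`. -/
def InterpolatedBy {ι κ : Type*} (C : Set F) (z v : ι → F) (x : κ → F) (δ : κ → ℝ) : Prop :=
  (∀ i, z i ∈ C ∧ v i ∈ normalCone C (z i)) ∧ ∀ k, x k ∈ deltaInterior (δ k) C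

/-- The interpolation conditions `Interp(α, β, D; λ)`, with `n i = v i / ‖v i‖`,
`r = 1/α - 1/β` and `s k = max 0 (δ k - 1/β)`. -/
def InterpCond {ι κ : Type*} (α β D lam : ℝ) (z v : ι → F) (x : κ → F) (δ : κ → ℝ) : Prop :=
  ∃ w : κ → F,
    (∀ i j, ‖z i - (1 / α) • (‖v i‖⁻¹ • v i) - (z j - (1 / β) • (‖v j‖⁻¹ • v j))‖ ≤
      1 / α - 1 / β) ∧
    (∀ i k, ‖z i - (1 / α) • (‖v i‖⁻¹ • v i) - w k‖ ≤
      (1 / α - 1 / β) - max 0 (δ k - 1 / β)) ∧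
    (∀ k, ‖x k - w k‖ ≤ 1 / β - δ k + max 0 (δ k - 1 / β)) ∧
    (∀ i j, ‖z i - (1 / β) • (‖v i‖⁻¹ • v i) - (z j - (1 / β) • (‖v j‖⁻¹ • v j))‖ ≤
      lam * (D - 2 / β)) ∧
    (∀ i k, ‖z i - (1 / β) • (‖v i‖⁻¹ • v i) - w k‖ ≤
      lam * (D - 2 / β) - max 0 (δ k - 1 / β)) ∧
    (∀ k l, ‖w k - w l‖ ≤ lam * (D - 2 / β) - max 0 (δ k - 1 / β) - max 0 (δ l - 1 / β))

section Normed

variable {E : Type*} [NormedAddCommGroup E] {s K C : Set E} {M D : ℝ}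

theorem diamLE_iUnion_closedBall {J : Type*} {P : J → E} {R : J → ℝ}
    (h : ∀ j l, ‖P j - P l‖ + R j + R l ≤ M) : DiamLE (⋃ j, closedBall (P j) (R j)) M := by
  intro x hx y hy
  obtain ⟨j, hxj⟩ := mem_iUnion.1 hx
  obtain ⟨l, hyl⟩ := mem_iUnion.1 hy
  have := norm_sub_le_norm_sub_add_norm_sub x (P j) y
  have := norm_sub_le_norm_sub_add_norm_sub (P j) (P l) y
  linarith [h j l, mem_closedBall_iff_norm.1 hxj, mem_closedBall_iff_norm'.1 hyl]

theorem diamLE_closedConvexHull [NormedSpace ℝ E] (h : DiamLE s M) :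
    DiamLE (closedConvexHull ℝ s) M := by
  have h₁ : ∀ y ∈ s, closedConvexHull ℝ s ⊆ closedBall y M := fun y hy =>
    closedConvexHull_min (fun x hx => mem_closedBall_iff_norm.2 (h x hx y hy))
      (convex_closedBall y M) isClosed_closedBall
  intro x hx y hy
  have h₂ : closedConvexHull ℝ s ⊆ closedBall x M :=
    closedConvexHull_min (fun y hy => mem_closedBall_comm.1 (h₁ y hy hx))
      (convex_closedBall x M) isClosed_closedBall
  exact mem_closedBall_iff_norm'.1 (h₂ hy)

theorem DiamLE.add_closedBall (h : DiamLE K M) (r : ℝ) :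
    DiamLE (K + closedBall 0 r) (M + 2 * r) := by
  rintro _ ⟨a, ha, u, hu, rfl⟩ _ ⟨b, hb, u', hu', rfl⟩
  rw [mem_closedBall_zero_iff] at hu hu'
  calc ‖a + u - (b + u')‖ = ‖(a - b) + (u - u')‖ := by rw [add_sub_add_comm]
    _ ≤ ‖a - b‖ + ‖u - u'‖ := norm_add_le _ _
    _ ≤ M + 2 * r := by linarith [h a ha b hb, norm_sub_le u u']

theorem DiamLE.norm_sub_add_add_le [NormedSpace ℝ E] [Nontrivial E] (h : DiamLE C D) {a b : E}
    {ρ ρ' : ℝ} (hρ : 0 ≤ ρ) (hρ' : 0 ≤ ρ') (ha : closedBall a ρ ⊆ C) (hb : closedBall b ρ' ⊆ C) :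
    ‖a - b‖ + ρ + ρ' ≤ D := by
  obtain ⟨e, he, hab⟩ : ∃ e : E, ‖e‖ = 1 ∧ a - b = ‖a - b‖ • e := by
    rcases eq_or_ne a b with rfl | hne
    · obtain ⟨e, he⟩ := exists_norm_eq E zero_le_one
      exact ⟨e, he, by simp⟩
    · have h0 := sub_ne_zero.2 hne
      exact ⟨_, norm_smul_inv_norm (𝕜 := ℝ) h0, (smul_inv_smul₀ (norm_ne_zero_iff.2 h0) _).symm⟩
  have hae : a + ρ • e ∈ C := ha <| by
    rw [mem_closedBall_iff_norm, add_sub_cancel_left, norm_smul, he, mul_one,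
      Real.norm_of_nonneg hρ]
  have hbe : b - ρ' • e ∈ C := hb <| by
    rw [mem_closedBall_iff_norm', sub_sub_cancel, norm_smul, he, mul_one, Real.norm_of_nonneg hρ']
  calc ‖a - b‖ + ρ + ρ' = ‖(‖a - b‖ + ρ + ρ') • e‖ := by
        rw [norm_smul, he, mul_one, Real.norm_of_nonneg (by positivity)]
    _ = ‖a + ρ • e - (b - ρ' • e)‖ := by
        rw [add_smul, add_smul, ← hab]; congr 1; abel
    _ ≤ D := h _ hae _ hbe

theorem closedBall_subset_add_closedBall [NormedSpace ℝ E] [ProperSpace E] {p : E} {ρ r : ℝ}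
    (hρ : 0 ≤ ρ) (hr : 0 ≤ r) (hK : closedBall p ρ ⊆ K) :
    closedBall p (ρ + r) ⊆ K + closedBall 0 r := by
  calc closedBall p (ρ + r) = closedBall p ρ + closedBall 0 r := by
        rw [closedBall_add_closedBall hρ hr, add_zero]
    _ ⊆ K + closedBall 0 r := add_subset_add_right hK

end Normed

theorem inner_add_smul_self_of_norm_eq_one {n : F} (hn : ‖n‖ = 1) (a : F) (c : ℝ) :
    ⟪n, a + c • n⟫ = ⟪n, a⟫ + c := by
  rw [inner_add_right, real_inner_smul_right, real_inner_self_eq_norm_sq, hn, one_pow, mul_one]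

section NormalCone

variable {s t C : Set F} {z v : F}

theorem smul_mem_normalCone (hv : v ∈ normalCone C z) {a : ℝ} (ha : 0 ≤ a) :
    a • v ∈ normalCone C z := fun y hy => by
  rw [real_inner_smul_left]
  exact mul_nonpos_of_nonneg_of_nonpos ha (hv y hy)

theorem normalCone_anti (hst : s ⊆ t) : normalCone t z ⊆ normalCone s z :=
  fun _ hv y hy => hv y (hst hy)

theorem add_mem_normalCone_add {a b : F} (hs : v ∈ normalCone s a) (ht : v ∈ normalCone t b) :
    v ∈ normalCone (s + t) (a + b) := by
  rintro _ ⟨x, hx, y, hy, rfl⟩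
  rw [add_sub_add_comm, inner_add_right]
  linarith [hs x hx, ht y hy]

theorem mem_normalCone_iUnion {ι : Sort*} {s : ι → Set F} :
    v ∈ normalCone (⋃ i, s i) z ↔ ∀ i, v ∈ normalCone (s i) z := by
  simp only [normalCone, mem_iUnion, mem_ofPred_eq]
  grind

theorem normalCone_closedConvexHull : normalCone (closedConvexHull ℝ s) z = normalCone s z := by
  refine (normalCone_anti subset_closedConvexHull).antisymm fun v hv => ?_
  have hconv : Convex ℝ {y : F | ⟪v, y - z⟫ ≤ 0} := by
    simp only [inner_sub_right, sub_nonpos]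
    exact convex_halfSpace_le (innerₛₗ ℝ v).isLinear _
  have hcl : IsClosed {y : F | ⟪v, y - z⟫ ≤ 0} := isClosed_le (by fun_prop) continuous_const
  exact fun y hy => closedConvexHull_min hv hconv hcl hy

theorem mem_normalCone_closedBall_iff {p : F} {ρ : ℝ} (hρ : 0 ≤ ρ) :
    v ∈ normalCone (closedBall p ρ) z ↔ ⟪v, p - z⟫ + ρ * ‖v‖ ≤ 0 := by
  constructor
  · intro hv
    rcases eq_or_ne v 0 with rfl | hv0
    · simp
    have hnv : 0 < ‖v‖ := norm_pos_iff.2 hv0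
    have hmem : p + (ρ / ‖v‖) • v ∈ closedBall p ρ := by
      rw [mem_closedBall_iff_norm, add_sub_cancel_left, norm_smul,
        Real.norm_of_nonneg (by positivity), div_mul_cancel₀ _ hnv.ne']
    have := hv _ hmem
    rwa [add_sub_right_comm, inner_add_right, real_inner_smul_right, real_inner_self_eq_norm_sq,
      pow_two, ← mul_assoc, div_mul_cancel₀ _ hnv.ne'] at this
  · intro h y hy
    have hy' : ⟪v, y - p⟫ ≤ ρ * ‖v‖ := (real_inner_le_norm _ _).trans <| by
      rw [mul_comm]; exact mul_le_mul_of_nonneg_right (mem_closedBall_iff_norm.1 hy) (norm_nonneg _)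
    rw [← sub_add_sub_cancel y p z, inner_add_right]
    linarith

theorem mem_frontier_of_mem_normalCone (hz : z ∈ C) (hv : v ∈ normalCone C z) (hv0 : v ≠ 0) :
    z ∈ frontier C := by
  refine ⟨subset_closure hz, fun hint => ?_⟩
  obtain ⟨ε, hε, hball⟩ := nhds_basis_closedBall.mem_iff.1 (mem_interior_iff_mem_nhds.1 hint)
  have := (mem_normalCone_closedBall_iff hε.le).1 (normalCone_anti hball hv)
  rw [sub_self, inner_zero_right, zero_add] at this
  linarith [mul_pos hε (norm_pos_iff.2 hv0)]

theorem exists_unit_mem_normalCone_of_notMem [CompleteSpace F] (hne : C.Nonempty)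
    (hcl : IsClosed C) (hconv : Convex ℝ C) {q : F} (hq : q ∉ C) :
    ∃ p ∈ C, ∃ n, ‖n‖ = 1 ∧ n ∈ normalCone C p := by
  obtain ⟨p, hp, hmin⟩ := exists_norm_eq_iInf_of_complete_convex hne hcl.isComplete hconv q
  have hqp : q - p ∈ normalCone C p := (norm_eq_iInf_iff_real_inner_le_zero hconv hp).1 hmin
  have hqp0 : q - p ≠ 0 := sub_ne_zero.2 fun h => hq (h ▸ hp)
  exact ⟨p, hp, _, norm_smul_inv_norm (𝕜 := ℝ) hqp0, smul_mem_normalCone hqp (by positivity)⟩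

/-- Hahn–Banach separation of `p` from the open convex set `interior C`. -/
theorem exists_unit_mem_normalCone_of_notMem_interior [CompleteSpace F] (hconv : Convex ℝ C)
    (hint : (interior C).Nonempty) {p : F} (hp : p ∉ interior C) :
    ∃ n, ‖n‖ = 1 ∧ n ∈ normalCone C p := by
  obtain ⟨f, hf⟩ := geometric_hahn_banach_open_point hconv.interior isOpen_interior hp
  set u := (InnerProductSpace.toDual ℝ F).symm f
  have hu : ∀ y, ⟪u, y⟫ = f y := fun y => InnerProductSpace.toDual_symm_apply
  have hu_normal : u ∈ normalCone C p := by
    intro y hy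
    have hy' : y ∈ closure (interior C) := by
      rw [hconv.closure_interior_eq_closure_of_nonempty_interior hint]
      exact subset_closure hy
    have := closure_minimal (fun a ha => (hf a ha).le)
      (isClosed_le f.continuous continuous_const) hy'
    rw [inner_sub_right, hu, hu]
    exact sub_nonpos.2 this
  obtain ⟨a, ha⟩ := hint
  have hu0 : u ≠ 0 := fun hu0 => by simpa [← hu, hu0] using hf a ha
  exact ⟨_, norm_smul_inv_norm (𝕜 := ℝ) hu0, smul_mem_normalCone hu_normal (by positivity)⟩

end NormalCone

section Smooth

variable {β : ℝ} {C : Set F}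

/-- Rolling a ball of radius `1/β` inside: a unit normal at `p + u` is forced to be `β • u`. -/
theorem isSmoothSet_add_closedBall [ProperSpace F] (hβ : 0 < β) {K : Set F}
    (hcl : IsClosed (K + closedBall 0 (1 / β))) : IsSmoothSet β (K + closedBall 0 (1 / β)) := by
  have hr : 0 < 1 / β := by positivity
  intro z hz n hn hn1
  obtain ⟨p, hp, u, hu, rfl⟩ := hcl.frontier_subset hz
  have hpr : closedBall p (1 / β) ⊆ K + closedBall 0 (1 / β) := by
    simpa using closedBall_subset_add_closedBall le_rfl hr.le
      (by rw [closedBall_zero]; exact singleton_subset_iff.2 hp)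
  have hnu : 1 / β ≤ ⟪n, u⟫ := by
    have := (mem_normalCone_closedBall_iff hr.le).1 (normalCone_anti hpr hn)
    rw [sub_add_cancel_left, inner_neg_right, hn1, mul_one] at this
    linarith
  have hu_eq : u = (1 / β) • n := by
    rw [mem_closedBall_zero_iff] at hu
    have hsq : ‖u - (1 / β) • n‖ ^ 2 ≤ 0 := by
      rw [norm_sub_sq_real, real_inner_smul_right, norm_smul, hn1, Real.norm_of_nonneg hr.le,
        real_inner_comm]
      nlinarith [norm_nonneg u]
    exact sub_eq_zero.1 (norm_eq_zero.1 (pow_eq_zero_iff two_ne_zero |>.1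
      (le_antisymm hsq (sq_nonneg _))))
  rwa [hu_eq, add_sub_cancel_right]

theorem IsSmoothSet.interior_nonempty [CompleteSpace F] (hsm : IsSmoothSet β C) (hβ : 0 < β)
    (hne : C.Nonempty) (hcl : IsClosed C) (hconv : Convex ℝ C) (hC : C ≠ univ) :
    (interior C).Nonempty := by
  obtain ⟨q, hq⟩ := nonempty_compl.2 hC
  obtain ⟨p, hp, n, hn1, hn⟩ := exists_unit_mem_normalCone_of_notMem hne hcl hconv hq
  have hball := hsm p (mem_frontier_of_mem_normalCone hp hn (norm_ne_zero_iff.1 (by simp [hn1])))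
    n hn hn1
  exact ⟨_, mem_interior_iff_mem_nhds.2
    (Filter.mem_of_superset (closedBall_mem_nhds _ (by positivity)) hball)⟩

/-- Take a point `p` of `∂C` nearest to `x`, at distance `t ≥ δ`. The normal `n` at `p` satisfies
`⟪n, x - p⟫ ≤ -t` since `closedBall x t ⊆ C`, and the rolling ball centred at `p - (1/β) • n` is
then within `1/β - t` of `x`. -/
theorem IsSmoothSet.exists_closedBall_subset [ProperSpace F] (hsm : IsSmoothSet β C) (hβ : 0 < β)
    (hcl : IsClosed C) (hconv : Convex ℝ C) (hC : C ≠ univ) {x : F} {δ : ℝ} (hδ : 0 ≤ δ)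
    (hδβ : δ ≤ 1 / β) (hx : closedBall x δ ⊆ C) :
    ∃ w, closedBall w (1 / β) ⊆ C ∧ dist x w ≤ 1 / β - δ := by
  have hxC : x ∈ C := hx (mem_closedBall_self hδ)
  have hCc : Cᶜ.Nonempty := nonempty_compl.2 hC
  set t := infDist x Cᶜ
  have hball : closedBall x t ⊆ C := hcl.closure_eq ▸ closedBall_infDist_compl_subset_closure hxC
  have hδt : δ ≤ t := (le_infDist hCc).2 fun y hy => not_lt.1 fun hlt =>
    hy (hx (mem_closedBall.2 (by rw [dist_comm]; exact hlt.le)))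
  rcases le_or_gt (1 / β) t with hrt | htr
  · exact ⟨x, (closedBall_subset_closedBall hrt).trans hball, by simpa using hδβ⟩
  obtain ⟨p, hpc, hpt⟩ := exists_mem_closure_infDist_eq_dist hCc x
  replace hpt : dist x p = t := hpt.symm
  rw [closure_compl] at hpc
  obtain ⟨n, hn1, hn⟩ := exists_unit_mem_normalCone_of_notMem_interior hconv
    (hsm.interior_nonempty hβ ⟨x, hxC⟩ hcl hconv hC) hpc
  have hpC : p ∈ C := hball (mem_closedBall.2 (by rw [dist_comm, hpt]))
  have hxp : ⟪n, x - p⟫ + t ≤ 0 := by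
    simpa [hn1] using (mem_normalCone_closedBall_iff infDist_nonneg).1 (normalCone_anti hball hn)
  refine ⟨p - (1 / β) • n, hsm p ⟨subset_closure hpC, hpc⟩ n hn hn1, ?_⟩
  have hsq : dist x (p - (1 / β) • n) ^ 2 ≤ (1 / β - t) ^ 2 := by
    rw [dist_eq_norm, sub_sub_eq_add_sub, add_sub_right_comm, norm_add_sq_real,
      real_inner_smul_right, norm_smul, hn1, Real.norm_of_nonneg (by positivity), real_inner_comm,
      ← dist_eq_norm, hpt]
    nlinarith
  have := (pow_le_pow_iff_left₀ dist_nonneg (by linarith) two_ne_zero).1 hsq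
  linarith

end Smooth

section Interpolation

variable {ι κ : Type*} {β D : ℝ} {z n : ι → F} {x : κ → F} {δ : κ → ℝ}

/-- `z i - (1/β) • n i` is the centre of the rolling ball at `z i`, and `w k` that of a ball of
radius `max 0 (δ k - 1/β) + 1/β` inside the set, close enough to `x k` to cover its `δ k`-ball. -/
def SmoothInterpCond (β D : ℝ) (z n : ι → F) (x : κ → F) (δ : κ → ℝ) (w : κ → F) : Prop :=
  (∀ i j, ⟪n i, z j - (1 / β) • n j - z i + (1 / β) • n i⟫ ≤ 0) ∧
  (∀ i k, ⟪n i, w k + max 0 (δ k - 1 / β) • n i - z i + (1 / β) • n i⟫ ≤ 0) ∧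
  (∀ k, ‖x k - w k‖ ≤ 1 / β - δ k + max 0 (δ k - 1 / β)) ∧
  (∀ i j, ‖z i - (1 / β) • n i - (z j - (1 / β) • n j)‖ ≤ D - 2 / β) ∧
  (∀ i k, ‖z i - (1 / β) • n i - w k‖ ≤ D - 2 / β - max 0 (δ k - 1 / β)) ∧
  (∀ k l, ‖w k - w l‖ ≤ D - 2 / β - max 0 (δ k - 1 / β) - max 0 (δ l - 1 / β))

theorem IsSmoothSet.exists_smoothInterpCond [ProperSpace F] [Nontrivial F] {C : Set F}
    (hsm : IsSmoothSet β C) (hβ : 0 < β) (hcl : IsClosed C) (hconv : Convex ℝ C)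
    (hdiam : DiamLE C D) (hn : ∀ i, ‖n i‖ = 1) (hz : ∀ i, z i ∈ C ∧ n i ∈ normalCone C (z i))
    (hδ : ∀ k, 0 ≤ δ k) (hx : ∀ k, x k ∈ deltaInterior (δ k) C) :
    ∃ w, SmoothInterpCond β D z n x δ w := by
  have hr : 0 < 1 / β := by positivity
  have hC : C ≠ univ := by
    rintro rfl
    exact NormedSpace.unbounded_univ ℝ F
      (isBounded_iff.2 ⟨D, fun a _ b _ => by simpa [dist_eq_norm] using hdiam a trivial b trivial⟩)
  have hc : ∀ i, closedBall (z i - (1 / β) • n i) (1 / β) ⊆ C := fun i =>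
    hsm _ (mem_frontier_of_mem_normalCone (hz i).1 (hz i).2 (norm_ne_zero_iff.1 (by simp [hn i])))
      _ (hz i).2 (hn i)
  have hw : ∀ k, ∃ w, closedBall w (max 0 (δ k - 1 / β) + 1 / β) ⊆ C ∧
      ‖x k - w‖ ≤ 1 / β - δ k + max 0 (δ k - 1 / β) := by
    intro k
    rcases le_total (δ k) (1 / β) with h | h
    · obtain ⟨w, hwC, hxw⟩ := hsm.exists_closedBall_subset hβ hcl hconv hC (hδ k) h (hx k)
      rw [max_eq_left (sub_nonpos.2 h)]
      exact ⟨w, by rwa [zero_add], by rwa [add_zero, ← dist_eq_norm]⟩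
    · rw [max_eq_right (sub_nonneg.2 h), sub_add_cancel]
      exact ⟨x k, hx k, by simp⟩
  choose w hwC hxw using hw
  have hinner : ∀ i p ρ, 0 ≤ ρ → closedBall p ρ ⊆ C → ⟪n i, p - z i⟫ + ρ ≤ 0 :=
    fun i p ρ hρ hp => by
      simpa [hn i] using (mem_normalCone_closedBall_iff hρ).1 (normalCone_anti hp (hz i).2)
  have hs : ∀ k, 0 ≤ max 0 (δ k - 1 / β) + 1 / β := fun k => by positivity
  have h2β : 2 / β = 1 / β + 1 / β := by ring
  refine ⟨w, fun i j => ?_, fun i k => ?_, hxw, fun i j => ?_, fun i k => ?_, fun k l => ?_⟩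
  · rw [inner_add_smul_self_of_norm_eq_one (hn i)]
    exact hinner i _ _ hr.le (hc j)
  · rw [inner_add_smul_self_of_norm_eq_one (hn i), add_sub_right_comm,
      inner_add_smul_self_of_norm_eq_one (hn i)]
    linarith [hinner i _ _ (hs k) (hwC k)]
  · linarith [hdiam.norm_sub_add_add_le hr.le hr.le (hc i) (hc j)]
  · linarith [hdiam.norm_sub_add_add_le hr.le (hs k) (hc i) (hwC k)]
  · linarith [hdiam.norm_sub_add_add_le (hs k) (hs l) (hwC k) (hwC l)]

theorem exists_smoothSet_add_closedBall [ProperSpace F] (hβ : 0 < β) {K : Set F}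
    (hne : K.Nonempty) (hcl : IsClosed K) (hconv : Convex ℝ K) (hdiam : DiamLE K (D - 2 / β))
    (hn : ∀ i, ‖n i‖ = 1)
    (hz : ∀ i, z i - (1 / β) • n i ∈ K ∧ n i ∈ normalCone K (z i - (1 / β) • n i)) {w : κ → F}
    (hw : ∀ k, closedBall (w k) (max 0 (δ k - 1 / β)) ⊆ K)
    (hxw : ∀ k, ‖x k - w k‖ ≤ 1 / β - δ k + max 0 (δ k - 1 / β)) :
    ∃ C : Set F, C.Nonempty ∧ IsClosed C ∧ Convex ℝ C ∧ IsSmoothSet β C ∧ DiamLE C D ∧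
      (∀ i, z i ∈ C ∧ n i ∈ normalCone C (z i)) ∧ ∀ k, x k ∈ deltaInterior (δ k) C := by
  have hr : 0 < 1 / β := by positivity
  have hCcl : IsClosed (K + closedBall (0 : F) (1 / β)) :=
    hcl.add_right_of_isCompact (isCompact_closedBall (0 : F) _)
  refine ⟨K + closedBall 0 (1 / β), hne.add (nonempty_closedBall.2 hr.le), hCcl,
    hconv.add (convex_closedBall 0 _), isSmoothSet_add_closedBall hβ hCcl, ?_,
    fun i => ⟨?_, ?_⟩, fun k => ?_⟩
  · convert hdiam.add_closedBall (1 / β) using 1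
    ring
  · refine closedBall_subset_add_closedBall (ρ := 0) le_rfl hr.le
      (by rw [closedBall_zero]; exact singleton_subset_iff.2 (hz i).1) ?_
    rw [zero_add, mem_closedBall_iff_norm, sub_sub_cancel, norm_smul, hn i, mul_one,
      Real.norm_of_nonneg hr.le]
  · have hball : n i ∈ normalCone (closedBall (0 : F) (1 / β)) ((1 / β) • n i) := by
      rw [mem_normalCone_closedBall_iff hr.le, zero_sub, inner_neg_right, real_inner_smul_right,
        real_inner_self_eq_norm_sq, hn i]
      simp
    simpa using add_mem_normalCone_add (hz i).2 hball
  · refine (closedBall_subset_closedBall' ?_).trans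
      (closedBall_subset_add_closedBall (le_max_left _ _) hr.le (hw k))
    rw [dist_eq_norm]
    linarith [hxw k]

theorem SmoothInterpCond.exists_smoothSet [ProperSpace F] (hβ : 0 < β) (hD : 2 / β ≤ D)
    (hn : ∀ i, ‖n i‖ = 1) {w : κ → F} (hw : SmoothInterpCond β D z n x δ w) :
    ∃ C : Set F, C.Nonempty ∧ IsClosed C ∧ Convex ℝ C ∧ IsSmoothSet β C ∧ DiamLE C D ∧
      (∀ i, z i ∈ C ∧ n i ∈ normalCone C (z i)) ∧ ∀ k, x k ∈ deltaInterior (δ k) C := by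
  obtain ⟨h1, h2, h3, h4, h5, h6⟩ := hw
  rcases isEmpty_or_nonempty (ι ⊕ κ) with hJ | hJ
  · have hdiam : DiamLE ({0} : Set F) (D - 2 / β) := by
      rintro _ rfl _ rfl
      simpa using hD
    exact exists_smoothSet_add_closedBall hβ (singleton_nonempty 0) isClosed_singleton
      (convex_singleton 0) hdiam hn (fun i => isEmptyElim (Sum.inl i : ι ⊕ κ))
      (fun k => isEmptyElim (Sum.inr k : ι ⊕ κ)) h3
  set P : ι ⊕ κ → F := Sum.elim (fun i => z i - (1 / β) • n i) w
  set R : ι ⊕ κ → ℝ := Sum.elim 0 (fun k => max 0 (δ k - 1 / β))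
  have hR : ∀ j, 0 ≤ R j := by
    rintro (i | k)
    exacts [le_rfl, le_max_left _ _]
  have hball : ∀ j, closedBall (P j) (R j) ⊆ closedConvexHull ℝ (⋃ j, closedBall (P j) (R j)) :=
    fun j => (subset_iUnion (fun j => closedBall (P j) (R j)) j).trans subset_closedConvexHull
  have hnormal : ∀ i, n i ∈ normalCone (⋃ j, closedBall (P j) (R j)) (z i - (1 / β) • n i) := by
    refine fun i => mem_normalCone_iUnion.2 ?_
    rintro (j | k) <;> rw [mem_normalCone_closedBall_iff (hR _), hn i, mul_one, ← sub_add]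
    · simpa [P, R] using h1 i j
    · have := h2 i k
      rw [inner_add_smul_self_of_norm_eq_one (hn i), add_sub_right_comm,
        inner_add_smul_self_of_norm_eq_one (hn i)] at this
      simp only [P, R, Sum.elim_inr, inner_add_smul_self_of_norm_eq_one (hn i)]
      linarith
  have hdiam : ∀ j l, ‖P j - P l‖ + R j + R l ≤ D - 2 / β := by
    rintro (i | k) (j | l) <;> simp only [P, R, Sum.elim_inl, Sum.elim_inr, Pi.zero_apply]
    · linarith [h4 i j]
    · linarith [h5 i l]
    · rw [norm_sub_rev]
      linarith [h5 j k]
    · linarith [h6 k l]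
  exact exists_smoothSet_add_closedBall hβ ((nonempty_closedBall.2 (hR hJ.some)).mono (hball _))
    isClosed_closedConvexHull convex_closedConvexHull
    (diamLE_closedConvexHull (diamLE_iUnion_closedBall hdiam)) hn
    (fun i => ⟨hball (.inl i) (mem_closedBall_self le_rfl),
      normalCone_closedConvexHull.ge (hnormal i)⟩)
    (fun k => hball (.inr k)) h3

end Interpolation

theorem smooth_interpolation_general {d : ℕ} (hd : 1 ≤ d)
    {ι κ : Type*} (β D : ℝ) (hβ : 0 < β) (hD : 2 / β ≤ D)
    (z v : ι → EuclideanSpace ℝ (Fin d)) (hv : ∀ i, v i ≠ 0)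
    (x : κ → EuclideanSpace ℝ (Fin d)) (δ : κ → ℝ) (hδ : ∀ k, 0 ≤ δ k) :
    (∃ C : Set (EuclideanSpace ℝ (Fin d)), C.Nonempty ∧ IsClosed C ∧ Convex ℝ C ∧
        IsSmoothSet β C ∧ DiamLE C D ∧ InterpolatedBy C z v x δ) ↔
      ∃ w : κ → EuclideanSpace ℝ (Fin d),
        (∀ i j, ⟪‖v i‖⁻¹ • v i,
            z j - (1 / β) • (‖v j‖⁻¹ • v j) - z i + (1 / β) • (‖v i‖⁻¹ • v i)⟫ ≤ 0) ∧
        (∀ i k, ⟪‖v i‖⁻¹ • v i,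
            w k + max 0 (δ k - 1 / β) • (‖v i‖⁻¹ • v i) - z i + (1 / β) • (‖v i‖⁻¹ • v i)⟫ ≤ 0) ∧
        (∀ k, ‖x k - w k‖ ≤ 1 / β - δ k + max 0 (δ k - 1 / β)) ∧
        (∀ i j, ‖z i - (1 / β) • (‖v i‖⁻¹ • v i) - (z j - (1 / β) • (‖v j‖⁻¹ • v j))‖ ≤
          D - 2 / β) ∧
        (∀ i k, ‖z i - (1 / β) • (‖v i‖⁻¹ • v i) - w k‖ ≤ D - 2 / β - max 0 (δ k - 1 / β)) ∧
        (∀ k l, ‖w k - w l‖ ≤ D - 2 / β - max 0 (δ k - 1 / β) - max 0 (δ l - 1 / β)) := by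
  have : Nonempty (Fin d) := ⟨⟨0, hd⟩⟩
  have hn : ∀ i, ‖‖v i‖⁻¹ • v i‖ = 1 := fun i => norm_smul_inv_norm (𝕜 := ℝ) (hv i)
  constructor
  · rintro ⟨C, -, hcl, hconv, hsm, hdiam, hz, hx⟩
    exact hsm.exists_smoothInterpCond hβ hcl hconv hdiam hn
      (fun i => ⟨(hz i).1, smul_mem_normalCone (hz i).2 (by positivity)⟩) hδ hx
  · rintro ⟨w, hw⟩
    obtain ⟨C, hne, hcl, hconv, hsm, hdiam, hz, hx⟩ := SmoothInterpCond.exists_smoothSet hβ hD hn hw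
    refine ⟨C, hne, hcl, hconv, hsm, hdiam, fun i => ⟨(hz i).1, ?_⟩, hx⟩
    have := smul_mem_normalCone (hz i).2 (norm_nonneg (v i))
    rwa [smul_inv_smul₀ (norm_ne_zero_iff.2 (hv i))] at this

/-- Interpolation by smooth convex sets of bounded diameter (`D ≥ 2/β`): interpolability
is equivalent to the existence of auxiliary points `w k` satisfying the listed conditions,
where `n i = v i / ‖v i‖` and `s k = max 0 (δ k - 1/β)`. -/
theorem smooth_interpolation {d : ℕ} (hd : 1 ≤ d)
    {ι κ : Type*} [Fintype ι] [Fintype κ] (β D : ℝ) (hβ : 0 < β) (hD : 2 / β ≤ D)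
    (z v : ι → EuclideanSpace ℝ (Fin d)) (hv : ∀ i, v i ≠ 0)
    (x : κ → EuclideanSpace ℝ (Fin d)) (δ : κ → ℝ) (hδ : ∀ k, 0 ≤ δ k) :
    (∃ C : Set (EuclideanSpace ℝ (Fin d)), C.Nonempty ∧ IsClosed C ∧ Convex ℝ C ∧
        IsSmoothSet β C ∧ DiamLE C D ∧ InterpolatedBy C z v x δ) ↔
      ∃ w : κ → EuclideanSpace ℝ (Fin d),
        (∀ i j, ⟪‖v i‖⁻¹ • v i,
            z j - (1 / β) • (‖v j‖⁻¹ • v j) - z i + (1 / β) • (‖v i‖⁻¹ • v i)⟫ ≤ 0) ∧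
        (∀ i k, ⟪‖v i‖⁻¹ • v i,
            w k + max 0 (δ k - 1 / β) • (‖v i‖⁻¹ • v i) - z i + (1 / β) • (‖v i‖⁻¹ • v i)⟫ ≤ 0) ∧
        (∀ k, ‖x k - w k‖ ≤ 1 / β - δ k + max 0 (δ k - 1 / β)) ∧
        (∀ i j, ‖z i - (1 / β) • (‖v i‖⁻¹ • v i) - (z j - (1 / β) • (‖v j‖⁻¹ • v j))‖ ≤
          D - 2 / β) ∧
        (∀ i k, ‖z i - (1 / β) • (‖v i‖⁻¹ • v i) - w k‖ ≤ D - 2 / β - max 0 (δ k - 1 / β)) ∧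
        (∀ k l, ‖w k - w l‖ ≤ D - 2 / β - max 0 (δ k - 1 / β) - max 0 (δ l - 1 / β)) :=
  smooth_interpolation_general hd β D hβ hD z v hv x δ hδ

end
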